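/- arXiv:2303.11795 — 2 statements merged into one kernel-verified Lean document; each statement's English description precedes it below -/
import Mathlib

section
/- The subspace b₁⁺(H) + u₁(H) is dense in L₁(H) for the trace norm: for every trace-class operator a on H and every ε > 0 there exist b ∈ b₁⁺(H) and s ∈ u₁(H) with ‖a − b − s‖₁ < ε. Equivalently, the functionals Φ(b), b ∈ b₁⁺(H), form a dense subspace of the image of Φ : L₁(H) → u(H)* in the quotient norm of L₁(H)/u₁(H). -/
/-!
Compress `a` to the finite windows `P_F = proj span {eₙ : n ∈ F}`. A finite matrix `c` splits as
`b + s` with `b` upper triangular with real diagonal and `s` skew-hermitian: `b` keeps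
`c m n + conj (c n m)` below the diagonal and `re (c n n)` on it. Writing `a = (u q) q` with
`q = |a|^{1/2}` Hilbert–Schmidt and `u` a contraction, we have
`a - P a P = ((1 - P) u q) q + (P u q) (q (1 - P))`, so `‖a - P a P‖₁` is bounded by
`‖(1 - P) u q‖₂ ‖q‖₂ + ‖u q‖₂ ‖q (1 - P)‖₂`, and both Hilbert–Schmidt tails tend to `0` as `F` grows.
-/

/- Setting: `H` is a separable complex Hilbert space with a fixed orthonormal
(Hilbert) basis `e` indexed by `ℤ`. -/

set_option synthInstance.maxHeartbeats 1000000
set_option maxHeartbeats 2000000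

noncomputable section
open ContinuousLinearMap

namespace PL

variable {H : Type*} [NormedAddCommGroup H] [InnerProductSpace ℂ H] [CompleteSpace H]

/-- `A` is a bounded skew-hermitian operator: `A* = -A`. -/
def SkewHerm (A : H →L[ℂ] H) : Prop := star A = -A

/-- `A` is Hilbert–Schmidt: `∑ₙ ‖A eₙ‖² < ∞` (computed in the orthonormal basis `e`;
this is equivalent to the basis-free notion). -/
def IsHS (e : HilbertBasis ℤ ℂ H) (A : H →L[ℂ] H) : Prop :=
  Summable (fun n : ℤ => ‖A (e n)‖ ^ 2)

/-- The Hilbert–Schmidt norm `‖A‖₂`. -/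
def hsNorm (e : HilbertBasis ℤ ℂ H) (A : H →L[ℂ] H) : ℝ :=
  Real.sqrt (∑' n : ℤ, ‖A (e n)‖ ^ 2)

/-- The absolute value `|A| = √(A* A)` of a bounded operator, via the continuous
functional calculus. -/
def absCLM (A : H →L[ℂ] H) : H →L[ℂ] H := CFC.sqrt (star A * A)

/-- `A` is trace class: `Tr |A| = ∑ₙ ⟨eₙ, |A| eₙ⟩ < ∞`. -/
def IsTC (e : HilbertBasis ℤ ℂ H) (A : H →L[ℂ] H) : Prop :=
  Summable (fun n : ℤ => (inner ℂ (e n) (absCLM A (e n)) : ℂ).re)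

/-- The trace norm `‖A‖₁ = Tr |A|`. -/
def traceNorm (e : HilbertBasis ℤ ℂ H) (A : H →L[ℂ] H) : ℝ :=
  ∑' n : ℤ, (inner ℂ (e n) (absCLM A (e n)) : ℂ).re

/-- The trace of a (trace-class) operator: `Tr A = ∑ₙ ⟨eₙ, A eₙ⟩`. -/
def traceOp (e : HilbertBasis ℤ ℂ H) (A : H →L[ℂ] H) : ℂ :=
  ∑' n : ℤ, (inner ℂ (e n) (A (e n)) : ℂ)

/-- `A` is upper triangular: `⟨eₘ, A eₙ⟩ = 0` whenever `m < n`. -/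
def UpperTri (e : HilbertBasis ℤ ℂ H) (A : H →L[ℂ] H) : Prop :=
  ∀ m n : ℤ, m < n → (inner ℂ (e m) (A (e n)) : ℂ) = 0

/-- All diagonal entries `⟨eₙ, A eₙ⟩` of `A` are real. -/
def RealDiag (e : HilbertBasis ℤ ℂ H) (A : H →L[ℂ] H) : Prop :=
  ∀ n : ℤ, (inner ℂ (e n) (A (e n)) : ℂ).im = 0

/-- Membership in `b₁⁺(H)`: trace-class, upper triangular, real diagonal. -/
def InB1 (e : HilbertBasis ℤ ℂ H) (A : H →L[ℂ] H) : Prop :=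
  IsTC e A ∧ UpperTri e A ∧ RealDiag e A

/-- Membership in `u₁(H)`: trace-class and skew-hermitian. -/
def InU1 (e : HilbertBasis ℤ ℂ H) (A : H →L[ℂ] H) : Prop :=
  IsTC e A ∧ SkewHerm A

/-- Membership in `b₂⁺(H)`: Hilbert–Schmidt, upper triangular, real diagonal. -/
def InB2 (e : HilbertBasis ℤ ℂ H) (A : H →L[ℂ] H) : Prop :=
  IsHS e A ∧ UpperTri e A ∧ RealDiag e A

/-- Membership in `u₂(H)`: Hilbert–Schmidt and skew-hermitian. -/
def InU2 (e : HilbertBasis ℤ ℂ H) (A : H →L[ℂ] H) : Prop :=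
  IsHS e A ∧ SkewHerm A

end PL

namespace PL

open scoped InnerProductSpace Topology
open Filter

variable {H : Type*} [NormedAddCommGroup H] [InnerProductSpace ℂ H]

lemma summable_iff_tsum_ofReal_ne_top {α : Type*} {f : α → ℝ} (hf : ∀ a, 0 ≤ f a) :
    Summable f ↔ ∑' a, ENNReal.ofReal (f a) ≠ ⊤ :=
  ⟨Summable.tsum_ofReal_ne_top,
    fun h => (ENNReal.summable_toReal h).congr fun a => ENNReal.toReal_ofReal (hf a)⟩

lemma tsum_eq_toReal_tsum_ofReal {α : Type*} {f : α → ℝ} (hf : ∀ a, 0 ≤ f a) :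
    ∑' a, f a = (∑' a, ENNReal.ofReal (f a)).toReal := by
  rw [ENNReal.tsum_toReal_eq fun _ => ENNReal.ofReal_ne_top]
  exact tsum_congr fun a => (ENNReal.toReal_ofReal (hf a)).symm

section HilbertSchmidt

variable {e : HilbertBasis ℤ ℂ H}

lemma hasSum_norm_inner_sq (e : HilbertBasis ℤ ℂ H) (v : H) :
    HasSum (fun m => ‖⟪e m, v⟫_ℂ‖ ^ 2) (‖v‖ ^ 2) := by
  have h := e.hasSum_inner_mul_inner v v
  have hterm : ∀ m, ⟪v, e m⟫_ℂ * ⟪e m, v⟫_ℂ = ((‖⟪e m, v⟫_ℂ‖ ^ 2 : ℝ) : ℂ) := fun m => by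
    rw [← inner_conj_symm v (e m), RCLike.conj_mul]
    norm_cast
  have hv : ⟪v, v⟫_ℂ = ((‖v‖ ^ 2 : ℝ) : ℂ) := by
    rw [inner_self_eq_norm_sq_to_K]
    norm_cast
  rw [hv] at h
  simp only [hterm] at h
  exact Complex.hasSum_ofReal.1 h

lemma IsHS.of_norm_apply_le {X Y : H →L[ℂ] H} (hY : IsHS e Y)
    (h : ∀ n, ‖X (e n)‖ ≤ ‖Y (e n)‖) : IsHS e X :=
  hY.of_nonneg_of_le (fun _ => sq_nonneg _) fun n => pow_le_pow_left₀ (norm_nonneg _) (h n) 2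

lemma hsNorm_le_of_norm_apply_le {X Y : H →L[ℂ] H} (hY : IsHS e Y)
    (h : ∀ n, ‖X (e n)‖ ≤ ‖Y (e n)‖) : hsNorm e X ≤ hsNorm e Y :=
  Real.sqrt_le_sqrt <| (hY.of_norm_apply_le h).tsum_le_tsum
    (fun n => pow_le_pow_left₀ (norm_nonneg _) (h n) 2) hY

lemma norm_apply_le_of_norm_le_one {C : H →L[ℂ] H} (hC : ‖C‖ ≤ 1) (x : H) : ‖C x‖ ≤ ‖x‖ := by
  simpa using C.le_of_opNorm_le hC x

lemma IsHS.mul_left_of_norm_le_one {C X : H →L[ℂ] H} (hC : ‖C‖ ≤ 1) (hX : IsHS e X) :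
    IsHS e (C * X) :=
  hX.of_norm_apply_le fun n => norm_apply_le_of_norm_le_one hC (X (e n))

lemma hsNorm_mul_le_of_norm_le_one {C X : H →L[ℂ] H} (hC : ‖C‖ ≤ 1) (hX : IsHS e X) :
    hsNorm e (C * X) ≤ hsNorm e X :=
  hsNorm_le_of_norm_apply_le hX fun n => norm_apply_le_of_norm_le_one hC (X (e n))

lemma summable_and_tsum_re_inner_le {X Y : H →L[ℂ] H} (hX : IsHS e X) (hY : IsHS e Y) :
    Summable (fun n => (⟪X (e n), Y (e n)⟫_ℂ).re) ∧
      ∑' n, (⟪X (e n), Y (e n)⟫_ℂ).re ≤ hsNorm e X * hsNorm e Y := by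
  obtain ⟨hsum, hle⟩ := Real.summable_and_inner_le_Lp_mul_Lq_tsum_of_nonneg .two_two
    (f := fun n => ‖X (e n)‖) (g := fun n => ‖Y (e n)‖) (fun _ => norm_nonneg _)
    (fun _ => norm_nonneg _) (by simpa [Real.rpow_two, IsHS] using hX)
    (by simpa [Real.rpow_two, IsHS] using hY)
  have hterm : ∀ n, |(⟪X (e n), Y (e n)⟫_ℂ).re| ≤ ‖X (e n)‖ * ‖Y (e n)‖ := fun n =>
    (Complex.abs_re_le_norm _).trans (norm_inner_le_norm _ _)
  have hsum' : Summable (fun n => (⟪X (e n), Y (e n)⟫_ℂ).re) := hsum.of_norm_bounded hterm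
  refine ⟨hsum', (hsum'.tsum_le_tsum (fun n => (le_abs_self _).trans (hterm n)) hsum).trans ?_⟩
  simpa [hsNorm, Real.sqrt_eq_rpow, Real.rpow_two] using hle

end HilbertSchmidt

section Projection

variable (e : HilbertBasis ℤ ℂ H)

open Classical in
def basisProj (F : Finset ℤ) : H →L[ℂ] H :=
  (Submodule.span ℂ (F.image e : Set H)).starProjection

variable {e}

lemma basisProj_apply_basis (F : Finset ℤ) (n : ℤ) :
    basisProj e F (e n) = if n ∈ F then e n else 0 := by
  classical
  split_ifs with hn
  · exact Submodule.starProjection_eq_self_iff.2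
      (Submodule.subset_span (by simpa using ⟨n, hn, rfl⟩))
  · refine (Submodule.starProjection_apply_eq_zero_iff _).2 ?_
    have hortho : (ℂ ∙ e n) ⟂ Submodule.span ℂ (F.image e : Set H) := by
      rw [Submodule.isOrtho_span]
      rintro u rfl v hv
      obtain ⟨i, hi, rfl⟩ := by simpa using hv
      exact e.orthonormal.2 fun h => hn (h ▸ hi)
    exact Submodule.isOrtho_iff_le.1 hortho (Submodule.mem_span_singleton_self _)

lemma norm_basisProj_le (F : Finset ℤ) : ‖basisProj e F‖ ≤ 1 :=
  Submodule.starProjection_norm_le _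

lemma one_sub_basisProj_apply_basis (F : Finset ℤ) (n : ℤ) :
    (1 - basisProj e F) (e n) = if n ∈ F then 0 else e n := by
  by_cases hn : n ∈ F <;> simp [basisProj_apply_basis, hn]

lemma IsHS.mul_one_sub_basisProj {X : H →L[ℂ] H} (hX : IsHS e X) (F : Finset ℤ) :
    IsHS e (X * (1 - basisProj e F)) :=
  hX.of_norm_apply_le fun n => by
    change ‖X ((1 - basisProj e F) (e n))‖ ≤ _
    rw [one_sub_basisProj_apply_basis]
    split_ifs <;> simp

lemma tendsto_hsNorm_mul_one_sub_basisProj (X : H →L[ℂ] H) :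
    Tendsto (fun F => hsNorm e (X * (1 - basisProj e F))) atTop (𝓝 0) := by
  have htail : ∀ F, hsNorm e (X * (1 - basisProj e F))
      = √(∑' n : {n // n ∉ F}, ‖X (e n)‖ ^ 2) := fun F => by
    have hcol : ∀ n, ‖(X * (1 - basisProj e F)) (e n)‖ ^ 2
        = Set.indicator {n | n ∉ F} (fun n => ‖X (e n)‖ ^ 2) n := fun n => by
      change ‖X ((1 - basisProj e F) (e n))‖ ^ 2 = _
      rw [one_sub_basisProj_apply_basis]
      by_cases hn : n ∈ F <;> simp [hn]
    rw [hsNorm, tsum_congr hcol, ← tsum_subtype]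
    rfl
  simpa only [htail, Real.sqrt_zero, Function.comp_def] using
    (Real.continuous_sqrt.tendsto 0).comp (tendsto_tsum_compl_atTop_zero fun n => ‖X (e n)‖ ^ 2)

end Projection

section Matrices

def triangularPart (c : ℤ → ℤ → ℂ) (m n : ℤ) : ℂ :=
  if n < m then c m n + starRingEnd ℂ (c n m) else if m = n then ((c m m).re : ℂ) else 0

lemma triangularPart_add_conj (c : ℤ → ℤ → ℂ) (m n : ℤ) :
    triangularPart c m n + starRingEnd ℂ (triangularPart c n m)
      = c m n + starRingEnd ℂ (c n m) := by
  rcases lt_trichotomy m n with h | rfl | h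
  · simp [triangularPart, h, h.not_gt, h.ne, add_comm]
  · simp [triangularPart, Complex.ext_iff]
  · simp [triangularPart, h, h.not_gt, h.ne]

variable (e : HilbertBasis ℤ ℂ H)

def matrixOp (F : Finset ℤ) (c : ℤ → ℤ → ℂ) : H →L[ℂ] H :=
  ∑ i ∈ F, ∑ j ∈ F, c i j • InnerProductSpace.rankOne ℂ (e i) (e j)

variable {e}

lemma matrixOp_apply_basis_of_not_mem {F : Finset ℤ} (c : ℤ → ℤ → ℂ) {n : ℤ} (hn : n ∉ F) :
    matrixOp e F c (e n) = 0 := by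
  simp only [matrixOp, sum_apply, smul_apply, InnerProductSpace.rankOne_apply]
  exact Finset.sum_eq_zero fun i _ => Finset.sum_eq_zero fun j hj => by
    rw [e.orthonormal.2 (ne_of_mem_of_not_mem hj hn), zero_smul, smul_zero]

lemma inner_matrixOp_apply_basis (F : Finset ℤ) (c : ℤ → ℤ → ℂ) (m n : ℤ) :
    ⟪e m, matrixOp e F c (e n)⟫_ℂ = if m ∈ F ∧ n ∈ F then c m n else 0 := by
  by_cases hn : n ∈ F <;> simp [matrixOp, orthonormal_iff_ite.1 e.orthonormal, hn]

lemma ext_inner_basis {T S : H →L[ℂ] H} (h : ∀ m n, ⟪e m, T (e n)⟫_ℂ = ⟪e m, S (e n)⟫_ℂ) :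
    T = S := by
  refine ContinuousLinearMap.ext_on (Submodule.dense_iff_topologicalClosure_eq_top.2 e.dense_span) ?_
  rintro _ ⟨n, rfl⟩
  have hT := e.hasSum_repr (T (e n))
  have hS := e.hasSum_repr (S (e n))
  simp only [e.repr_apply_apply, h] at hT hS
  exact hT.unique hS

end Matrices

variable [CompleteSpace H]

section Adjoint

variable {e : HilbertBasis ℤ ℂ H}

lemma tsum_ofReal_norm_adjoint_apply_sq (X : H →L[ℂ] H) :
    ∑' n, ENNReal.ofReal (‖adjoint X (e n)‖ ^ 2) = ∑' n, ENNReal.ofReal (‖X (e n)‖ ^ 2) := by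
  have parseval : ∀ (Y : H →L[ℂ] H) (n : ℤ), ENNReal.ofReal (‖Y (e n)‖ ^ 2)
      = ∑' m, ENNReal.ofReal (‖⟪e m, Y (e n)⟫_ℂ‖ ^ 2) := fun Y n => by
    rw [← (hasSum_norm_inner_sq e _).tsum_eq,
      ENNReal.ofReal_tsum_of_nonneg (fun _ => sq_nonneg _) (hasSum_norm_inner_sq e _).summable]
  simp only [parseval]
  rw [ENNReal.tsum_comm]
  refine tsum_congr fun n => tsum_congr fun m => ?_
  rw [← adjoint_inner_left X, norm_inner_symm]

lemma isHS_adjoint_iff {X : H →L[ℂ] H} : IsHS e (adjoint X) ↔ IsHS e X := by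
  rw [IsHS, IsHS, summable_iff_tsum_ofReal_ne_top (fun _ => sq_nonneg _),
    summable_iff_tsum_ofReal_ne_top (fun _ => sq_nonneg _), tsum_ofReal_norm_adjoint_apply_sq]

lemma hsNorm_adjoint (X : H →L[ℂ] H) : hsNorm e (adjoint X) = hsNorm e X := by
  rw [hsNorm, hsNorm, tsum_eq_toReal_tsum_ofReal (fun _ => sq_nonneg _),
    tsum_eq_toReal_tsum_ofReal (fun _ => sq_nonneg _), tsum_ofReal_norm_adjoint_apply_sq]

lemma isSelfAdjoint_basisProj (F : Finset ℤ) : IsSelfAdjoint (basisProj e F) :=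
  isSelfAdjoint_starProjection _

lemma adjoint_one_sub_basisProj_mul (F : Finset ℤ) (X : H →L[ℂ] H) :
    adjoint ((1 - basisProj e F) * X) = adjoint X * (1 - basisProj e F) := by
  rw [← star_eq_adjoint, star_mul, star_sub, star_one, (isSelfAdjoint_basisProj F).star_eq,
    star_eq_adjoint]

lemma IsHS.one_sub_basisProj_mul {X : H →L[ℂ] H} (hX : IsHS e X) (F : Finset ℤ) :
    IsHS e ((1 - basisProj e F) * X) := by
  rw [← isHS_adjoint_iff, adjoint_one_sub_basisProj_mul]
  exact (isHS_adjoint_iff.2 hX).mul_one_sub_basisProj F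

lemma tendsto_hsNorm_one_sub_basisProj_mul (X : H →L[ℂ] H) :
    Tendsto (fun F => hsNorm e ((1 - basisProj e F) * X)) atTop (𝓝 0) := by
  simpa only [← hsNorm_adjoint ((1 - basisProj e _) * X), adjoint_one_sub_basisProj_mul] using
    tendsto_hsNorm_mul_one_sub_basisProj (adjoint X)

end Adjoint

section AbsoluteValue

lemma absCLM_nonneg (T : H →L[ℂ] H) : 0 ≤ absCLM T := CFC.sqrt_nonneg _

lemma absCLM_mul_self (T : H →L[ℂ] H) : absCLM T * absCLM T = star T * T :=
  CFC.sqrt_mul_sqrt_self _ (star_mul_self_nonneg T)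

lemma norm_absCLM_apply (T : H →L[ℂ] H) (x : H) : ‖absCLM T x‖ = ‖T x‖ := by
  have hsq : ‖absCLM T x‖ ^ 2 = ‖T x‖ ^ 2 := by
    rw [apply_norm_sq_eq_inner_adjoint_left, apply_norm_sq_eq_inner_adjoint_left,
      (absCLM_nonneg T).isSelfAdjoint.adjoint_eq, ← star_eq_adjoint]
    exact congrArg (fun A : H →L[ℂ] H => RCLike.re ⟪A x, x⟫_ℂ) (absCLM_mul_self T)
  exact (pow_left_inj₀ (norm_nonneg _) (norm_nonneg _) two_ne_zero).1 hsq

lemma re_inner_apply_eq_norm_sqrt_apply_sq {T : H →L[ℂ] H} (hT : 0 ≤ T) (x : H) :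
    (⟪x, T x⟫_ℂ).re = ‖CFC.sqrt T x‖ ^ 2 := by
  rw [apply_norm_sq_eq_inner_adjoint_right, (CFC.sqrt_nonneg T).isSelfAdjoint.adjoint_eq]
  exact congrArg (fun A : H →L[ℂ] H => RCLike.re ⟪x, A x⟫_ℂ) (CFC.sqrt_mul_sqrt_self T hT).symm

/- Douglas' factorization: `S x ↦ T x` is a contraction on the range of `S`; extend it to the
closure of the range and precompose with the orthogonal projection onto that closure. -/
theorem exists_norm_le_one_mul_eq {S T : H →L[ℂ] H} (h : ∀ x, ‖T x‖ ≤ ‖S x‖) :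
    ∃ V : H →L[ℂ] H, ‖V‖ ≤ 1 ∧ V * S = T := by
  set K := (LinearMap.range (S : H →ₗ[ℂ] H)).topologicalClosure
  let ι : H →ₗ[ℂ] K := (S : H →ₗ[ℂ] H).codRestrict K fun x =>
    Submodule.le_topologicalClosure _ (LinearMap.mem_range_self _ x)
  have hι : DenseRange ι := by
    refine Topology.IsInducing.subtypeVal.dense_iff.2 fun y => ?_
    rw [← Set.range_comp]
    exact y.2
  have hTι : ∀ x, ‖(T : H →ₗ[ℂ] H) x‖ ≤ 1 * ‖ι x‖ := fun x => (one_mul ‖S x‖).symm ▸ h x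
  refine ⟨(T : H →ₗ[ℂ] H).extendOfNorm ι ∘L K.orthogonalProjectionOnto, ?_, ?_⟩
  · exact (opNorm_comp_le _ _).trans (mul_le_one₀
      (LinearMap.opNorm_extendOfNorm_le hι zero_le_one hTι) (norm_nonneg _)
      K.orthogonalProjectionOnto_norm_le)
  · ext x
    have hx : K.orthogonalProjectionOnto (S x) = ι x :=
      K.orthogonalProjectionOnto_mem_subspace_eq_self (ι x)
    show (T : H →ₗ[ℂ] H).extendOfNorm ι (K.orthogonalProjectionOnto (S x)) = T x
    rw [hx]
    exact LinearMap.extendOfNorm_eq hι ⟨1, hTι⟩ x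

end AbsoluteValue

section TraceClass

variable {e : HilbertBasis ℤ ℂ H}

lemma traceNorm_nonneg (A : H →L[ℂ] H) : 0 ≤ traceNorm e A :=
  tsum_nonneg fun n => by
    rw [re_inner_apply_eq_norm_sqrt_apply_sq (absCLM_nonneg A)]
    positivity

lemma isTC_of_apply_basis_eq_zero {A : H →L[ℂ] H} (F : Finset ℤ) (h : ∀ n ∉ F, A (e n) = 0) :
    IsTC e A :=
  summable_of_ne_finset_zero fun n hn => by
    rw [norm_eq_zero.1 ((norm_absCLM_apply A _).trans (by rw [h n hn, norm_zero])),
      inner_zero_right, Complex.zero_re]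

theorem IsTC.exists_isHS_mul_eq {a : H →L[ℂ] H} (ha : IsTC e a) :
    ∃ C q : H →L[ℂ] H, IsHS e C ∧ IsHS e q ∧ a = C * q := by
  obtain ⟨u, hu, hua⟩ := exists_norm_le_one_mul_eq (S := absCLM a) (T := a)
    fun x => (norm_absCLM_apply a x).ge
  have hq : IsHS e (CFC.sqrt (absCLM a)) := (by
    simpa only [IsTC, re_inner_apply_eq_norm_sqrt_apply_sq (absCLM_nonneg a)] using ha :
      Summable fun n => ‖CFC.sqrt (absCLM a) (e n)‖ ^ 2)
  refine ⟨u * CFC.sqrt (absCLM a), CFC.sqrt (absCLM a), hq.mul_left_of_norm_le_one hu, hq, ?_⟩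
  rw [mul_assoc, CFC.sqrt_mul_sqrt_self _ (absCLM_nonneg a), hua]

/- With a contraction `W` such that `W r = |r|`, the diagonal entry `⟪eₙ, |r| eₙ⟫` is
`⟪(W A₁)† eₙ, B₁ eₙ⟫ + ⟪(W A₂)† eₙ, B₂ eₙ⟫`; sum with Cauchy–Schwarz. -/
theorem traceNorm_mul_add_mul_le {A₁ B₁ A₂ B₂ : H →L[ℂ] H} (hA₁ : IsHS e A₁) (hB₁ : IsHS e B₁)
    (hA₂ : IsHS e A₂) (hB₂ : IsHS e B₂) :
    traceNorm e (A₁ * B₁ + A₂ * B₂) ≤ hsNorm e A₁ * hsNorm e B₁ + hsNorm e A₂ * hsNorm e B₂ := by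
  set r := A₁ * B₁ + A₂ * B₂
  obtain ⟨W, hW, hWr⟩ := exists_norm_le_one_mul_eq (S := r) (T := absCLM r)
    fun x => (norm_absCLM_apply r x).le
  have hterm : ∀ n, (⟪e n, absCLM r (e n)⟫_ℂ).re
      = (⟪adjoint (W * A₁) (e n), B₁ (e n)⟫_ℂ).re + (⟪adjoint (W * A₂) (e n), B₂ (e n)⟫_ℂ).re := by
    intro n
    rw [adjoint_inner_left, adjoint_inner_left, ← Complex.add_re, ← inner_add_right, ← hWr]
    simp only [r, mul_add, add_apply]
    rfl
  have hbound : ∀ A, IsHS e A → IsHS e (adjoint (W * A)) ∧ hsNorm e (adjoint (W * A)) ≤ hsNorm e A :=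
    fun A hA => ⟨isHS_adjoint_iff.2 (hA.mul_left_of_norm_le_one hW),
      (hsNorm_adjoint _).trans_le (hsNorm_mul_le_of_norm_le_one hW hA)⟩
  obtain ⟨hs₁, hle₁⟩ := summable_and_tsum_re_inner_le (hbound A₁ hA₁).1 hB₁
  obtain ⟨hs₂, hle₂⟩ := summable_and_tsum_re_inner_le (hbound A₂ hA₂).1 hB₂
  calc traceNorm e r
      = ∑' n, ((⟪adjoint (W * A₁) (e n), B₁ (e n)⟫_ℂ).re
          + (⟪adjoint (W * A₂) (e n), B₂ (e n)⟫_ℂ).re) := tsum_congr hterm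
    _ = ∑' n, (⟪adjoint (W * A₁) (e n), B₁ (e n)⟫_ℂ).re
          + ∑' n, (⟪adjoint (W * A₂) (e n), B₂ (e n)⟫_ℂ).re := hs₁.tsum_add hs₂
    _ ≤ hsNorm e (adjoint (W * A₁)) * hsNorm e B₁ + hsNorm e (adjoint (W * A₂)) * hsNorm e B₂ :=
      add_le_add hle₁ hle₂
    _ ≤ hsNorm e A₁ * hsNorm e B₁ + hsNorm e A₂ * hsNorm e B₂ :=
      add_le_add (mul_le_mul_of_nonneg_right (hbound A₁ hA₁).2 (Real.sqrt_nonneg _))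
        (mul_le_mul_of_nonneg_right (hbound A₂ hA₂).2 (Real.sqrt_nonneg _))

theorem tendsto_traceNorm_sub_basisProj_mul_mul {a : H →L[ℂ] H} (ha : IsTC e a) :
    Tendsto (fun F => traceNorm e (a - basisProj e F * a * basisProj e F)) atTop (𝓝 0) := by
  obtain ⟨C, q, hC, hq, rfl⟩ := ha.exists_isHS_mul_eq
  have hbound : ∀ F, traceNorm e (C * q - basisProj e F * (C * q) * basisProj e F)
      ≤ hsNorm e ((1 - basisProj e F) * C) * hsNorm e q
        + hsNorm e C * hsNorm e (q * (1 - basisProj e F)) := fun F => by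
    have hsplit : C * q - basisProj e F * (C * q) * basisProj e F
        = (1 - basisProj e F) * C * q + basisProj e F * C * (q * (1 - basisProj e F)) := by
      noncomm_ring
    rw [hsplit]
    exact (traceNorm_mul_add_mul_le (hC.one_sub_basisProj_mul F) hq
      (hC.mul_left_of_norm_le_one (norm_basisProj_le F)) (hq.mul_one_sub_basisProj F)).trans
      (add_le_add_right (mul_le_mul_of_nonneg_right
        (hsNorm_mul_le_of_norm_le_one (norm_basisProj_le F) hC) (Real.sqrt_nonneg _)) _)
  refine squeeze_zero (fun F => traceNorm_nonneg _) hbound ?_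
  simpa using ((tendsto_hsNorm_one_sub_basisProj_mul C).mul_const _).add
    ((tendsto_hsNorm_mul_one_sub_basisProj q).const_mul _)

theorem exists_inB1_inU1_add_eq (F : Finset ℤ) (a : H →L[ℂ] H) :
    ∃ b s, InB1 e b ∧ InU1 e s ∧ b + s = basisProj e F * a * basisProj e F := by
  set c := basisProj e F * a * basisProj e F
  have hP : ∀ n ∉ F, basisProj e F (e n) = 0 := fun n hn => by simp [basisProj_apply_basis, hn]
  have hc : ∀ n ∉ F, c (e n) = 0 := fun n hn => by simp [c, hP n hn]
  have hc' : ∀ n ∉ F, adjoint c (e n) = 0 := fun n hn => by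
    rw [← star_eq_adjoint]
    simp [c, star_mul, (isSelfAdjoint_basisProj F).star_eq, mul_assoc, hP n hn]
  have hentry : ∀ m n, ¬(m ∈ F ∧ n ∈ F) → ⟪e m, c (e n)⟫_ℂ = 0 := fun m n hmn => by
    by_cases hn : n ∈ F
    · rw [← adjoint_inner_left, hc' m fun hm => hmn ⟨hm, hn⟩, inner_zero_left]
    · rw [hc n hn, inner_zero_right]
  set b := matrixOp e F (triangularPart fun m n => ⟪e m, c (e n)⟫_ℂ)
  have hself : c + adjoint c = b + adjoint b := ext_inner_basis (e := e) fun m n => by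
    rw [add_apply, add_apply, inner_add_right, inner_add_right, adjoint_inner_right,
      adjoint_inner_right, ← inner_conj_symm (c (e m)), ← inner_conj_symm (b (e m))]
    simp only [b, inner_matrixOp_apply_basis]
    by_cases hmn : m ∈ F ∧ n ∈ F
    · rw [if_pos hmn, if_pos hmn.symm, triangularPart_add_conj]
    · rw [if_neg hmn, if_neg fun h => hmn h.symm, hentry m n hmn, hentry n m fun h => hmn h.symm]
  refine ⟨b, c - b, ⟨?_, ?_, ?_⟩, ⟨?_, ?_⟩, add_sub_cancel _ _⟩
  · exact isTC_of_apply_basis_eq_zero F fun n hn => matrixOp_apply_basis_of_not_mem _ hn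
  · intro m n hmn
    simp [b, inner_matrixOp_apply_basis, triangularPart, hmn.not_gt, hmn.ne]
  · intro n
    by_cases hn : n ∈ F <;> simp [b, inner_matrixOp_apply_basis, triangularPart, hn]
  · exact isTC_of_apply_basis_eq_zero F fun n hn => by
      rw [sub_apply, hc n hn, matrixOp_apply_basis_of_not_mem _ hn, sub_zero]
  · rw [SkewHerm, star_sub, star_eq_adjoint, star_eq_adjoint, neg_sub, sub_eq_sub_iff_add_eq_add,
      add_comm, hself]

end TraceClass

/-- `b₁⁺(H) + u₁(H)` is dense in `L₁(H)` for the trace norm: every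
trace-class `a` is approximated within any `ε > 0` by a sum `b + s` with `b ∈ b₁⁺(H)`
and `s ∈ u₁(H)`. -/
theorem statement_6 {H : Type*} [NormedAddCommGroup H] [InnerProductSpace ℂ H]
    [CompleteSpace H] (e : HilbertBasis ℤ ℂ H) (a : H →L[ℂ] H) (ha : IsTC e a)
    (ε : ℝ) (hε : 0 < ε) :
    ∃ b s : H →L[ℂ] H, InB1 e b ∧ InU1 e s ∧ traceNorm e (a - b - s) < ε := by
  obtain ⟨F, hF⟩ := ((tendsto_traceNorm_sub_basisProj_mul_mul ha).eventually (gt_mem_nhds hε)).exists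
  obtain ⟨b, s, hb, hs, hbs⟩ := exists_inB1_inU1_add_eq (e := e) F a
  exact ⟨b, s, hb, hs, by rwa [sub_sub, hbs]⟩

end PL
end
end

section
/- For every unitary operator g on H, the bilinear form Π_r(g) is antisymmetric and vanishes on skew-hermitian arguments: for all trace-class operators x₁, x₂ on H, Π_r(g)(x₁, x₂) = −Π_r(g)(x₂, x₁), and if x₁ is skew-hermitian then Π_r(g)(x₁, x₂) = 0 and Π_r(g)(x₂, x₁) = 0. Hence Π_r(g) descends to a well-defined antisymmetric bilinear form on the quotient L₁(H)/u₁(H). -/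
/-!
Put `yᵢ = g⁻¹ p_{b₂⁺}(xᵢ) g` and split `yᵢ = zᵢ + wᵢ` with `zᵢ ∈ u₂`, `wᵢ ∈ b₂⁺`. Expanding
`Tr(y₁ y₂)` bilinearly gives `Tr(y₁ z₂) + Tr(y₂ z₁) = Tr(y₁ y₂) + Tr(z₁ z₂) - Tr(w₁ w₂)`, and all
three traces on the right are real: `Tr(z₁ z₂)` is its own conjugate because `zᵢ* = -zᵢ`, the
diagonal of a product of upper triangular operators is the product of the diagonals, and
`Tr(y₁ y₂) = Tr(p_{b₂⁺}(x₁) p_{b₂⁺}(x₂))` by cyclicity. If `x₁` is skew-hermitian, so is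
`p_{b₂⁺}(x₁) = x₁ - p_{u₂}(x₁)`, and a skew-hermitian operator in `b₂⁺` vanishes.

Trace class operators are Hilbert–Schmidt since `|x|² ≤ ‖|x|‖ |x|`, and for Hilbert–Schmidt `A`,
`B` the diagonal series of `Tr(A B)` is the fibrewise sum of the absolutely summable double series
`⟨eₙ, A eₘ⟩⟨eₘ, B eₙ⟩`; this yields cyclicity and bilinearity of the trace.
-/

/- Setting: `H` is a separable complex Hilbert space with a fixed orthonormal
(Hilbert) basis `e` indexed by `ℤ`. -/

set_option synthInstance.maxHeartbeats 1000000
set_option maxHeartbeats 2000000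

noncomputable section
open ContinuousLinearMap

namespace PL

variable {H : Type*} [NormedAddCommGroup H] [InnerProductSpace ℂ H] [CompleteSpace H]

/-- Given projection maps `pu`, `pb` realizing `L₂(H) = u₂(H) ⊕ b₂⁺(H)`, and a
unitary `g` (so `g⁻¹ = g*`), the bilinear map
`Π_r(g)(x₁, x₂) = Im Tr((g⁻¹ p_{b₂⁺}(x₁) g) · p_{u₂}(g⁻¹ p_{b₂⁺}(x₂) g))`. -/
def Pir (e : HilbertBasis ℤ ℂ H) (pu pb : (H →L[ℂ] H) → (H →L[ℂ] H))
    (g x₁ x₂ : H →L[ℂ] H) : ℝ :=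
  (traceOp e ((star g * pb x₁ * g) * pu (star g * pb x₂ * g))).im


end PL

theorem HilbertBasis.hasSum_norm_inner_sq {ι 𝕜 E : Type*} [RCLike 𝕜] [NormedAddCommGroup E]
    [InnerProductSpace 𝕜 E] (b : HilbertBasis ι 𝕜 E) (v : E) :
    HasSum (fun i => ‖inner 𝕜 (b i) v‖ ^ 2) (‖v‖ ^ 2) := by
  simpa [b.repr_apply_apply] using lp.hasSum_norm (p := 2) (by norm_num) (b.repr v)

theorem HilbertBasis.eq_zero_of_inner_eq_zero {ι 𝕜 E : Type*} [RCLike 𝕜] [NormedAddCommGroup E]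
    [InnerProductSpace 𝕜 E] (b : HilbertBasis ι 𝕜 E) {v : E} (h : ∀ i, inner 𝕜 (b i) v = 0) :
    v = 0 :=
  b.repr.injective <| lp.ext <| funext fun i => by simp [b.repr_apply_apply, h]

theorem CStarAlgebra.mul_self_le_norm_smul {A : Type*} [NonUnitalCStarAlgebra A] [PartialOrder A]
    [StarOrderedRing A] {a : A} (ha : 0 ≤ a) : a * a ≤ ‖a‖ • a := by
  obtain ⟨s, hs, rfl⟩ : ∃ s : A, IsSelfAdjoint s ∧ s * s = a :=
    ⟨CFC.sqrt a, (CFC.sqrt_nonneg a).isSelfAdjoint, CFC.sqrt_mul_sqrt_self a⟩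
  simpa [hs.star_eq, mul_assoc] using
    CStarAlgebra.star_left_conjugate_le_norm_smul (a := s) ha.isSelfAdjoint

theorem HilbertBasis.clm_ext {ι 𝕜 E F : Type*} [RCLike 𝕜] [NormedAddCommGroup E]
    [InnerProductSpace 𝕜 E] [NormedAddCommGroup F] [NormedSpace 𝕜 F] (b : HilbertBasis ι 𝕜 E)
    {f g : E →L[𝕜] F} (h : ∀ i, f (b i) = g (b i)) : f = g :=
  ContinuousLinearMap.ext_on (Submodule.dense_iff_topologicalClosure_eq_top.mpr b.dense_span) <| by
    rintro _ ⟨i, rfl⟩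
    exact h i

namespace PL

variable {H : Type*} [NormedAddCommGroup H] [InnerProductSpace ℂ H] {e : HilbertBasis ℤ ℂ H}

local notation "⟪" x ", " y "⟫" => (inner ℂ x y : ℂ)

theorem isHS_iff_summable_entries {A : H →L[ℂ] H} :
    IsHS e A ↔ Summable fun p : ℤ × ℤ => ‖⟪e p.2, A (e p.1)⟫‖ ^ 2 := by
  rw [summable_prod_of_nonneg fun _ => by positivity, IsHS]
  simp only [fun n => (e.hasSum_norm_inner_sq (A (e n))).tsum_eq,
    fun n => (e.hasSum_norm_inner_sq (A (e n))).summable, forall_const, true_and]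

theorem isHS_zero : IsHS e (0 : H →L[ℂ] H) := by
  simp [IsHS, summable_zero]

theorem IsHS.mul_left {A : H →L[ℂ] H} (hA : IsHS e A) (B : H →L[ℂ] H) : IsHS e (B * A) :=
  .of_nonneg_of_le (fun _ => by positivity)
    (fun n => mul_pow ‖B‖ ‖A (e n)‖ 2 ▸ pow_le_pow_left₀ (norm_nonneg _) (B.le_opNorm _) 2)
    (Summable.mul_left (‖B‖ ^ 2) hA)

def traceMulTerm (e : HilbertBasis ℤ ℂ H) (A B : H →L[ℂ] H) (p : ℤ × ℤ) : ℂ :=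
  ⟪e p.1, A (e p.2)⟫ * ⟪e p.2, B (e p.1)⟫

theorem summable_traceMulTerm {A B : H →L[ℂ] H} (hA : IsHS e A) (hB : IsHS e B) :
    Summable (traceMulTerm e A B) := by
  rw [isHS_iff_summable_entries] at hA hB
  refine .of_norm <| .of_nonneg_of_le (fun _ => by positivity) (fun p => ?_)
    ((hA.prod_symm.add hB).div_const 2)
  simp only [traceMulTerm, norm_mul, Prod.fst_swap, Prod.snd_swap]
  linarith [two_mul_le_add_sq ‖⟪e p.1, A (e p.2)⟫‖ ‖⟪e p.2, B (e p.1)⟫‖]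

variable [CompleteSpace H]

theorem inner_star_apply_left (A : H →L[ℂ] H) (x y : H) : ⟪star A x, y⟫ = ⟪x, A y⟫ :=
  adjoint_inner_left A y x

theorem inner_star_apply_right (A : H →L[ℂ] H) (x y : H) : ⟪x, star A y⟫ = ⟪A x, y⟫ :=
  adjoint_inner_right A x y

theorem IsHS.star {A : H →L[ℂ] H} (hA : IsHS e A) : IsHS e (star A) := by
  rw [isHS_iff_summable_entries] at hA ⊢
  refine hA.prod_symm.congr fun p => ?_
  rw [Prod.fst_swap, Prod.snd_swap, inner_star_apply_right, norm_inner_symm]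

theorem IsHS.mul_right {A : H →L[ℂ] H} (hA : IsHS e A) (B : H →L[ℂ] H) : IsHS e (A * B) := by
  simpa using (hA.star.mul_left (Star.star B)).star

theorem IsTC.isHS {A : H →L[ℂ] H} (hA : IsTC e A) : IsHS e A := by
  have hT : 0 ≤ absCLM A := CFC.sqrt_nonneg _
  have hsq : absCLM A * absCLM A = star A * A := CFC.sqrt_mul_sqrt_self _ (star_mul_self_nonneg A)
  have hle := (le_def _ _).mp (CStarAlgebra.mul_self_le_norm_smul hT)
  refine .of_nonneg_of_le (fun _ => by positivity) (fun n => ?_) (hA.mul_left ‖absCLM A‖)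
  have := hle.re_inner_nonneg_right (e n)
  rw [apply_norm_sq_eq_inner_adjoint_right, ← star_eq_adjoint, ← mul_def, ← hsq]
  simp only [sub_apply, inner_sub_right, map_sub, smul_apply, inner_smul_right_eq_smul,
    RCLike.smul_re] at this
  exact sub_nonneg.mp this

theorem hasSum_traceMulTerm_fiber (A B : H →L[ℂ] H) (n : ℤ) :
    HasSum (fun m => traceMulTerm e A B (n, m)) ⟪e n, (A * B) (e n)⟫ := by
  simpa [traceMulTerm, inner_star_apply_left] using
    e.hasSum_inner_mul_inner (star A (e n)) (B (e n))

theorem traceOp_mul_eq_tsum {A B : H →L[ℂ] H} (hA : IsHS e A) (hB : IsHS e B) :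
    traceOp e (A * B) = ∑' p, traceMulTerm e A B p :=
  ((summable_traceMulTerm hA hB).hasSum.prod_fiberwise (hasSum_traceMulTerm_fiber A B)).tsum_eq

theorem hasSum_traceOp_mul {A B : H →L[ℂ] H} (hA : IsHS e A) (hB : IsHS e B) :
    HasSum (fun n => ⟪e n, (A * B) (e n)⟫) (traceOp e (A * B)) :=
  ((summable_traceMulTerm hA hB).hasSum.prod_fiberwise
    (hasSum_traceMulTerm_fiber A B)).summable.hasSum

theorem traceOp_mul_comm {A B : H →L[ℂ] H} (hA : IsHS e A) (hB : IsHS e B) :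
    traceOp e (A * B) = traceOp e (B * A) := by
  rw [traceOp_mul_eq_tsum hA hB, traceOp_mul_eq_tsum hB hA,
    ← (Equiv.prodComm ℤ ℤ).tsum_eq (traceMulTerm e B A)]
  exact tsum_congr fun p => mul_comm _ _

theorem traceOp_add_mul {A A' B : H →L[ℂ] H} (hA : IsHS e A) (hA' : IsHS e A') (hB : IsHS e B) :
    traceOp e ((A + A') * B) = traceOp e (A * B) + traceOp e (A' * B) := by
  refine (HasSum.tsum_eq ?_)
  simpa [add_mul, inner_add_right] using (hasSum_traceOp_mul hA hB).add (hasSum_traceOp_mul hA' hB)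

theorem traceOp_mul_add {A B B' : H →L[ℂ] H} (hA : IsHS e A) (hB : IsHS e B) (hB' : IsHS e B') :
    traceOp e (A * (B + B')) = traceOp e (A * B) + traceOp e (A * B') := by
  refine (HasSum.tsum_eq ?_)
  simpa [mul_add, inner_add_right] using (hasSum_traceOp_mul hA hB).add (hasSum_traceOp_mul hA hB')

theorem traceOp_star (A : H →L[ℂ] H) : traceOp e (star A) = starRingEnd ℂ (traceOp e A) := by
  simp only [traceOp, inner_star_apply_right, ← inner_conj_symm (A _) (e _), Complex.conj_tsum]

theorem im_traceOp_mul_of_inU2 {u₁ u₂ : H →L[ℂ] H} (h₁ : InU2 e u₁) (h₂ : InU2 e u₂) :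
    (traceOp e (u₁ * u₂)).im = 0 := by
  rw [← Complex.conj_eq_iff_im, ← traceOp_star, star_mul, h₁.2, h₂.2, neg_mul_neg]
  exact traceOp_mul_comm h₂.1 h₁.1

theorem inner_mul_apply_self_of_upperTri {b₁ b₂ : H →L[ℂ] H} (h₁ : UpperTri e b₁)
    (h₂ : UpperTri e b₂) (n : ℤ) :
    ⟪e n, (b₁ * b₂) (e n)⟫ = ⟪e n, b₁ (e n)⟫ * ⟪e n, b₂ (e n)⟫ := by
  refine (hasSum_traceMulTerm_fiber b₁ b₂ n).unique (hasSum_single n fun m hm => ?_)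
  rcases hm.lt_or_gt with h | h
  · simp [traceMulTerm, h₂ m n h]
  · simp [traceMulTerm, h₁ n m h]

theorem im_traceOp_mul_of_inB2 {b₁ b₂ : H →L[ℂ] H} (h₁ : InB2 e b₁) (h₂ : InB2 e b₂) :
    (traceOp e (b₁ * b₂)).im = 0 := by
  have := Complex.hasSum_im (hasSum_traceOp_mul h₁.1 h₂.1)
  simp only [inner_mul_apply_self_of_upperTri h₁.2.1 h₂.2.1, Complex.mul_im, h₁.2.2 _, h₂.2.2 _,
    mul_zero, zero_mul, add_zero] at this
  exact this.unique hasSum_zero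

theorem inner_apply_of_skewHerm {c : H →L[ℂ] H} (hc : SkewHerm c) (x y : H) :
    ⟪x, c y⟫ = -starRingEnd ℂ ⟪y, c x⟫ := by
  rw [inner_conj_symm, ← inner_star_apply_left, hc, neg_apply, inner_neg_left]

theorem eq_zero_of_skewHerm_of_upperTri {c : H →L[ℂ] H} (hsk : SkewHerm c) (ht : UpperTri e c)
    (hd : RealDiag e c) : c = 0 := by
  have hent : ∀ m n, ⟪e m, c (e n)⟫ = 0 := by
    intro m n
    rcases lt_trichotomy m n with h | rfl | h
    · exact ht m n h
    · have := congrArg Complex.re (inner_apply_of_skewHerm hsk (e m) (e m))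
      simp only [Complex.neg_re, Complex.conj_re] at this
      exact Complex.ext (by rw [Complex.zero_re]; linarith) (hd m)
    · rw [inner_apply_of_skewHerm hsk, ht n m h, map_zero, neg_zero]
  exact e.clm_ext fun n => e.eq_zero_of_inner_eq_zero fun m => by simpa using hent m n

theorem traceOp_conj_mul_conj {g c₁ c₂ : H →L[ℂ] H} (hg : g ∈ unitary (H →L[ℂ] H))
    (h₁ : IsHS e c₁) (h₂ : IsHS e c₂) :
    traceOp e ((star g * c₁ * g) * (star g * c₂ * g)) = traceOp e (c₁ * c₂) := by
  have hcancel : ∀ a b : H →L[ℂ] H, a * g * (star g * b) = a * b := fun a b => by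
    rw [mul_assoc, ← mul_assoc g, Unitary.mul_star_self_of_mem hg, one_mul]
  rw [← mul_assoc, hcancel, mul_assoc,
    traceOp_mul_comm (h₁.mul_left (star g)) (h₂.mul_right g), hcancel, traceOp_mul_comm h₂ h₁]

def IsU2B2Decomposition (e : HilbertBasis ℤ ℂ H) (pu pb : (H →L[ℂ] H) → (H →L[ℂ] H)) : Prop :=
  ∀ x : H →L[ℂ] H, IsHS e x → InU2 e (pu x) ∧ InB2 e (pb x) ∧ pu x + pb x = x

namespace IsU2B2Decomposition

variable {pu pb : (H →L[ℂ] H) → (H →L[ℂ] H)}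

theorem pb_eq_zero_of_skewHerm (hdec : IsU2B2Decomposition e pu pb) {x : H →L[ℂ] H}
    (hx : IsHS e x) (hsk : SkewHerm x) : pb x = 0 := by
  obtain ⟨hu, hb, hsum⟩ := hdec x hx
  refine eq_zero_of_skewHerm_of_upperTri ?_ hb.2.1 hb.2.2
  rw [SkewHerm, eq_sub_of_add_eq' hsum, star_sub, hsk, hu.2, neg_sub, neg_sub_neg]

theorem pu_zero (hdec : IsU2B2Decomposition e pu pb) : pu 0 = 0 := by
  obtain ⟨-, -, h⟩ := hdec 0 isHS_zero
  rwa [hdec.pb_eq_zero_of_skewHerm isHS_zero (by simp [SkewHerm]), add_zero] at h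

theorem im_traceOp_mul_pu_eq_neg (hdec : IsU2B2Decomposition e pu pb) {y₁ y₂ : H →L[ℂ] H}
    (h₁ : IsHS e y₁) (h₂ : IsHS e y₂) (h : (traceOp e (y₁ * y₂)).im = 0) :
    (traceOp e (y₁ * pu y₂)).im = -(traceOp e (y₂ * pu y₁)).im := by
  obtain ⟨hz₁, hw₁, hy₁⟩ := hdec y₁ h₁
  obtain ⟨hz₂, hw₂, hy₂⟩ := hdec y₂ h₂
  have h₁₂ : traceOp e (y₁ * pu y₂) = traceOp e (pu y₁ * pu y₂) + traceOp e (pb y₁ * pu y₂) := by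
    rw [← traceOp_add_mul hz₁.1 hw₁.1 hz₂.1, hy₁]
  have h₂₁ : traceOp e (y₂ * pu y₁) = traceOp e (pu y₁ * pu y₂) + traceOp e (pu y₁ * pb y₂) := by
    rw [traceOp_mul_comm h₂ hz₁.1, ← traceOp_mul_add hz₁.1 hz₂.1 hw₂.1, hy₂]
  have hyy : traceOp e (y₁ * y₂) = traceOp e (pu y₁ * pu y₂) + traceOp e (pu y₁ * pb y₂) +
      (traceOp e (pb y₁ * pu y₂) + traceOp e (pb y₁ * pb y₂)) := by
    rw [← traceOp_mul_add hz₁.1 hz₂.1 hw₂.1, ← traceOp_mul_add hw₁.1 hz₂.1 hw₂.1, hy₂,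
      ← traceOp_add_mul hz₁.1 hw₁.1 h₂, hy₁]
  rw [hyy] at h
  rw [h₁₂, h₂₁]
  simp only [Complex.add_im] at h ⊢
  linarith [im_traceOp_mul_of_inU2 hz₁ hz₂, im_traceOp_mul_of_inB2 hw₁ hw₂]

end IsU2B2Decomposition

/-- for every unitary `g`, `Π_r(g)` is antisymmetric on trace-class
operators and vanishes whenever one argument is skew-hermitian (hence it descends to
the quotient `L₁(H)/u₁(H)`). -/
theorem statement_13 {H : Type*} [NormedAddCommGroup H] [InnerProductSpace ℂ H]
    [CompleteSpace H] (e : HilbertBasis ℤ ℂ H)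
    (pu pb : (H →L[ℂ] H) → (H →L[ℂ] H))
    (hdec : ∀ x : H →L[ℂ] H, IsHS e x →
      InU2 e (pu x) ∧ InB2 e (pb x) ∧ pu x + pb x = x)
    (g : H →L[ℂ] H) (hg : g ∈ unitary (H →L[ℂ] H))
    (x₁ x₂ : H →L[ℂ] H) (hx₁ : IsTC e x₁) (hx₂ : IsTC e x₂) :
    Pir e pu pb g x₁ x₂ = - Pir e pu pb g x₂ x₁ ∧
    (SkewHerm x₁ → Pir e pu pb g x₁ x₂ = 0 ∧ Pir e pu pb g x₂ x₁ = 0) := by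
  have hsplit : IsU2B2Decomposition e pu pb := hdec
  obtain ⟨-, hb₁, -⟩ := hdec x₁ hx₁.isHS
  obtain ⟨-, hb₂, -⟩ := hdec x₂ hx₂.isHS
  refine ⟨hsplit.im_traceOp_mul_pu_eq_neg ((hb₁.1.mul_left _).mul_right _)
    ((hb₂.1.mul_left _).mul_right _) ?_, fun hsk => ?_⟩
  · rw [traceOp_conj_mul_conj hg hb₁.1 hb₂.1]
    exact im_traceOp_mul_of_inB2 hb₁ hb₂
  · have hpb : pb x₁ = 0 := hsplit.pb_eq_zero_of_skewHerm hx₁.isHS hsk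
    simp [Pir, traceOp, hpb, hsplit.pu_zero]

end PL
end
end
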